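/- arXiv:2409.10773 — 3 statements merged into one kernel-verified Lean document; each statement's English description precedes it below -/
import Mathlib

section
/- Let f : ℝ^d → ℝ be convex and L-Lipschitz in the ℓ2 norm, and let V be a random vector distributed as the standard multivariate normal truncated to the unit ℓ∞-ball. For ρ > 0 define f_ρ(x) = E[f(x + ρV)]. Then f(x) ≤ f_ρ(x) ≤ f(x) + (5/4) L ρ √d for all x. -/
open MeasureTheory Real Set
open scoped NNReal

/-!
Jensen's inequality for the convex `f` and the centred law of `V` gives
`f x = f (E[x + ρ V]) ≤ E[f (x + ρ V)]`. For the upper bound, `f (x + ρ V) ≤ f x + L ρ ‖V‖`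
by the Lipschitz property, and `‖V‖ ≤ √d` because `V` lies in the unit cube; so the bound
even holds with constant `1` in place of `5/4`. The truncated Gaussian is a probability measure
and is centred because its density is a product of even one-dimensional probability densities.
-/

/-- Standard normal CDF. -/
noncomputable def stdNormalCDF (t : ℝ) : ℝ :=
  ∫ s in Set.Iic t, (2 * π) ^ (-(1:ℝ)/2) * Real.exp (-(s^2) / 2)

/-- The standard Gaussian on `ℝ^d` truncated to the unit ℓ∞-ball, as a measure. -/
noncomputable def truncGaussMeasure (d : ℕ) : Measure (EuclideanSpace ℝ (Fin d)) :=
  volume.withDensity (fun v => ENNReal.ofReal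
    (Set.indicator {v : EuclideanSpace ℝ (Fin d) | ∀ i, |v i| ≤ 1}
      (fun v => ((stdNormalCDF 1 - stdNormalCDF (-1)) ^ d)⁻¹ *
        (2 * π) ^ (-(d:ℝ)/2) * Real.exp (-(‖v‖^2) / 2)) v))

section Smoothing

variable {E : Type*} [NormedAddCommGroup E] [NormedSpace ℝ E] {K : ℝ≥0} {f : E → ℝ}

lemma LipschitzWith.abs_comp_add_smul_sub_le (hf : LipschitzWith K f) (x v : E) (ρ : ℝ) :
    |f (x + ρ • v) - f x| ≤ K * |ρ| * ‖v‖ := by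
  simpa only [← Real.dist_eq, dist_self_add_left, norm_smul, Real.norm_eq_abs, mul_assoc]
    using hf.dist_le_mul (x + ρ • v) x

variable [MeasurableSpace E] {μ : Measure E}

lemma ConvexOn.le_integral_comp_add_smul [CompleteSpace E] [IsProbabilityMeasure μ]
    (hf : ConvexOn ℝ univ f) (hfc : Continuous f) (hμ : Integrable (fun v => v) μ)
    (hmean : ∫ v, v ∂μ = 0) (x : E) (ρ : ℝ) (hfi : Integrable (fun v => f (x + ρ • v)) μ) :
    f x ≤ ∫ v, f (x + ρ • v) ∂μ := by
  have hsmul : Integrable (fun v => ρ • v) μ := hμ.smul ρ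
  have hmean' : ∫ v, x + ρ • v ∂μ = x := by
    rw [integral_add (integrable_const x) hsmul, integral_const, probReal_univ, one_smul,
      integral_smul, hmean, smul_zero, add_zero]
  simpa only [hmean'] using hf.map_integral_le (f := fun v => x + ρ • v) hfc.continuousOn
    isClosed_univ (Filter.Eventually.of_forall fun v => mem_univ _)
    ((integrable_const x).add hsmul) hfi

variable [BorelSpace E]

lemma LipschitzWith.integrable_comp_add_smul [IsFiniteMeasure μ] (hf : LipschitzWith K f)
    (hμ : Integrable (fun v => v) μ) (x : E) (ρ : ℝ) :
    Integrable (fun v => f (x + ρ • v)) μ := by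
  refine Integrable.mono' ((integrable_const |f x|).add (hμ.norm.const_mul (K * |ρ|)))
    (hf.continuous.comp (continuous_const.add (continuous_const_smul ρ))).aestronglyMeasurable
    (Filter.Eventually.of_forall fun v => ?_)
  change |f (x + ρ • v)| ≤ |f x| + K * |ρ| * ‖v‖
  linarith [abs_sub_abs_le_abs_sub (f (x + ρ • v)) (f x), hf.abs_comp_add_smul_sub_le x v ρ]

lemma LipschitzWith.integral_comp_add_smul_le [IsProbabilityMeasure μ] (hf : LipschitzWith K f)
    (hμ : Integrable (fun v => v) μ) (x : E) {ρ : ℝ} (hρ : 0 ≤ ρ) :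
    ∫ v, f (x + ρ • v) ∂μ ≤ f x + K * ρ * ∫ v, ‖v‖ ∂μ := by
  have hpt (v : E) : f (x + ρ • v) ≤ f x + K * ρ * ‖v‖ := by
    linarith [le_abs_self (f (x + ρ • v) - f x),
      abs_of_nonneg hρ ▸ hf.abs_comp_add_smul_sub_le x v ρ]
  calc ∫ v, f (x + ρ • v) ∂μ ≤ ∫ v, f x + K * ρ * ‖v‖ ∂μ :=
        integral_mono (hf.integrable_comp_add_smul hμ x ρ)
          ((integrable_const _).add (hμ.norm.const_mul _)) hpt
    _ = f x + K * ρ * ∫ v, ‖v‖ ∂μ := by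
        rw [integral_add (integrable_const _) (hμ.norm.const_mul _), integral_const, probReal_univ,
          one_smul, integral_const_mul]

end Smoothing

lemma integral_id_withDensity_eq_zero_of_even {E : Type*} [NormedAddCommGroup E]
    [NormedSpace ℝ E] [MeasurableSpace E] [MeasurableNeg E] (μ : Measure E) [μ.IsNegInvariant]
    {p : E → ℝ} (hp : Measurable p) (heven : ∀ v, p (-v) = p v) :
    ∫ v, v ∂μ.withDensity (fun v => ENNReal.ofReal (p v)) = 0 := by
  rw [integral_withDensity_eq_integral_toReal_smul hp.ennreal_ofReal
    (Filter.Eventually.of_forall fun _ => ENNReal.ofReal_lt_top)]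
  set F : E → E := fun v => (ENNReal.ofReal (p v)).toReal • v
  have hodd : ∫ v, F (-v) ∂μ = -∫ v, F v ∂μ := by
    simp only [F, heven, smul_neg, integral_neg]
  rw [integral_neg_eq_self, eq_neg_iff_add_eq_zero, ← two_smul ℝ] at hodd
  exact (smul_eq_zero.mp hodd).resolve_left two_ne_zero

lemma isProbabilityMeasure_withDensity_prod {ι : Type*} [Fintype ι] {p : ℝ → ℝ}
    (hp0 : ∀ t, 0 ≤ p t) (hpi : Integrable p) (hp1 : ∫ t, p t = 1) :
    IsProbabilityMeasure ((volume : Measure (EuclideanSpace ℝ ι)).withDensity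
      fun v => ENNReal.ofReal (∏ i, p (v i))) := by
  have hint : Integrable (fun v : EuclideanSpace ℝ ι => ∏ i, p (v i)) := by
    rw [← (PiLp.volume_preserving_toLp ι).integrable_comp_emb
      (MeasurableEquiv.toLp 2 (ι → ℝ)).measurableEmbedding]
    exact Integrable.fintype_prod fun _ => hpi
  have hone : ∫ v : EuclideanSpace ℝ ι, ∏ i, p (v i) = 1 := by
    rw [← (PiLp.volume_preserving_toLp ι).integral_comp
      (MeasurableEquiv.toLp 2 (ι → ℝ)).measurableEmbedding]
    simp [integral_fintype_prod_volume_eq_pow, hp1]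
  constructor
  rw [withDensity_apply _ MeasurableSet.univ, Measure.restrict_univ,
    ← ofReal_integral_eq_lintegral_ofReal hint
      (Filter.Eventually.of_forall fun v => Finset.prod_nonneg fun i _ => hp0 _), hone,
    ENNReal.ofReal_one]

open ProbabilityTheory

lemma gaussianPDFReal_zero_one (t : ℝ) :
    gaussianPDFReal 0 1 t = (2 * π) ^ (-(1:ℝ) / 2) * exp (-t ^ 2 / 2) := by
  rw [gaussianPDFReal, NNReal.coe_one, sqrt_eq_rpow, ← rpow_neg (by positivity)]
  congr 2 <;> ring

lemma gaussianPDFReal_zero_one_neg (t : ℝ) :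
    gaussianPDFReal 0 1 (-t) = gaussianPDFReal 0 1 t := by
  rw [gaussianPDFReal_zero_one, gaussianPDFReal_zero_one, neg_sq]

lemma prod_gaussianPDFReal_zero_one {ι : Type*} [Fintype ι] (v : EuclideanSpace ℝ ι) :
    ∏ i, gaussianPDFReal 0 1 (v i) =
      (2 * π) ^ (-(Fintype.card ι : ℝ) / 2) * exp (-‖v‖ ^ 2 / 2) := by
  simp only [gaussianPDFReal_zero_one, Finset.prod_mul_distrib, Finset.prod_const, ← exp_sum,
    Finset.card_univ, EuclideanSpace.norm_sq_eq, Real.norm_eq_abs, sq_abs, ← Finset.sum_div,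
    ← Finset.sum_neg_distrib]
  rw [← rpow_natCast, ← rpow_mul (by positivity)]
  ring_nf

lemma stdNormalCDF_eq_integral_gaussianPDFReal (t : ℝ) :
    stdNormalCDF t = ∫ s in Iic t, gaussianPDFReal 0 1 s := by
  simp only [stdNormalCDF, gaussianPDFReal_zero_one]

lemma stdNormalCDF_sub_stdNormalCDF (a b : ℝ) :
    stdNormalCDF b - stdNormalCDF a = ∫ t in a..b, gaussianPDFReal 0 1 t := by
  simp only [stdNormalCDF_eq_integral_gaussianPDFReal]
  exact intervalIntegral.integral_Iic_sub_Iic (integrable_gaussianPDFReal 0 1).integrableOn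
    (integrable_gaussianPDFReal 0 1).integrableOn

lemma stdNormalCDF_strictMono : StrictMono stdNormalCDF := fun a b hab => by
  rw [← sub_pos, stdNormalCDF_sub_stdNormalCDF]
  exact intervalIntegral.intervalIntegral_pos_of_pos
    (integrable_gaussianPDFReal 0 1).intervalIntegrable
    (fun t => gaussianPDFReal_pos 0 1 t one_ne_zero) hab

noncomputable def truncStdGaussianPDF : ℝ → ℝ :=
  (Icc (-1) 1).indicator fun t => (stdNormalCDF 1 - stdNormalCDF (-1))⁻¹ * gaussianPDFReal 0 1 t

lemma truncStdGaussianPDF_nonneg (t : ℝ) : 0 ≤ truncStdGaussianPDF t := by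
  have := stdNormalCDF_strictMono (show (-1 : ℝ) < 1 by norm_num)
  exact indicator_nonneg (fun s _ => mul_nonneg (inv_nonneg.mpr (sub_nonneg.mpr this.le))
    (gaussianPDFReal_nonneg 0 1 s)) t

lemma measurable_truncStdGaussianPDF : Measurable truncStdGaussianPDF :=
  ((measurable_gaussianPDFReal 0 1).const_mul _).indicator measurableSet_Icc

lemma integrable_truncStdGaussianPDF : Integrable truncStdGaussianPDF :=
  ((integrable_gaussianPDFReal 0 1).const_mul _).indicator measurableSet_Icc

lemma integral_truncStdGaussianPDF : ∫ t, truncStdGaussianPDF t = 1 := by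
  rw [truncStdGaussianPDF, integral_indicator measurableSet_Icc, integral_const_mul,
    integral_Icc_eq_integral_Ioc, ← intervalIntegral.integral_of_le (by norm_num),
    ← stdNormalCDF_sub_stdNormalCDF]
  exact inv_mul_cancel₀ (sub_pos.mpr (stdNormalCDF_strictMono (by norm_num))).ne'

lemma truncStdGaussianPDF_neg (t : ℝ) : truncStdGaussianPDF (-t) = truncStdGaussianPDF t := by
  simp only [truncStdGaussianPDF, indicator_apply, neg_mem_Icc_iff, neg_neg,
    gaussianPDFReal_zero_one_neg]

lemma truncStdGaussianPDF_eq_zero {t : ℝ} (ht : 1 < |t|) : truncStdGaussianPDF t = 0 :=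
  indicator_of_notMem (s := Icc (-1) 1) (fun h => ht.not_ge (abs_le.mpr h)) _

lemma measurable_prod_truncStdGaussianPDF {ι : Type*} [Fintype ι] :
    Measurable fun v : EuclideanSpace ℝ ι => ∏ i, truncStdGaussianPDF (v i) :=
  Finset.measurable_prod _ fun i _ =>
    measurable_truncStdGaussianPDF.comp (EuclideanSpace.proj (𝕜 := ℝ) i).continuous.measurable

lemma truncGaussMeasure_eq_withDensity (d : ℕ) :
    truncGaussMeasure d =
      volume.withDensity fun v => ENNReal.ofReal (∏ i, truncStdGaussianPDF (v i)) := by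
  refine congrArg _ (funext fun v => congrArg _ ?_)
  by_cases hv : ∀ i, |v i| ≤ 1
  · have hIcc (i : Fin d) : v i ∈ Icc (-1) 1 := abs_le.mp (hv i)
    simp only [indicator_of_mem (show v ∈ {v : EuclideanSpace ℝ (Fin d) | ∀ i, |v i| ≤ 1} from hv),
      truncStdGaussianPDF, indicator_of_mem (hIcc _), Finset.prod_mul_distrib, Finset.prod_const,
      Finset.card_univ, Fintype.card_fin, prod_gaussianPDFReal_zero_one, inv_pow, mul_assoc]
  · obtain ⟨i, hi⟩ := not_forall.mp hv
    rw [indicator_of_notMem (s := {v : EuclideanSpace ℝ (Fin d) | ∀ i, |v i| ≤ 1}) hv,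
      Finset.prod_eq_zero (Finset.mem_univ i) (truncStdGaussianPDF_eq_zero (not_le.mp hi))]

instance (d : ℕ) : IsProbabilityMeasure (truncGaussMeasure d) := by
  rw [truncGaussMeasure_eq_withDensity]
  exact isProbabilityMeasure_withDensity_prod truncStdGaussianPDF_nonneg
    integrable_truncStdGaussianPDF integral_truncStdGaussianPDF

lemma integral_id_truncGaussMeasure (d : ℕ) : ∫ v, v ∂truncGaussMeasure d = 0 := by
  rw [truncGaussMeasure_eq_withDensity]
  exact integral_id_withDensity_eq_zero_of_even volume measurable_prod_truncStdGaussianPDF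
    fun v => Finset.prod_congr rfl fun i _ => truncStdGaussianPDF_neg (v i)

lemma ae_abs_le_one_truncGaussMeasure (d : ℕ) : ∀ᵐ v ∂truncGaussMeasure d, ∀ i, |v i| ≤ 1 := by
  rw [truncGaussMeasure_eq_withDensity,
    ae_withDensity_iff measurable_prod_truncStdGaussianPDF.ennreal_ofReal]
  refine Filter.Eventually.of_forall fun v hv i => not_lt.mp fun hi => hv ?_
  rw [Finset.prod_eq_zero (Finset.mem_univ i) (truncStdGaussianPDF_eq_zero hi), ENNReal.ofReal_zero]

lemma EuclideanSpace.norm_le_sqrt_card_of_forall_abs_le_one {ι : Type*} [Fintype ι]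
    {v : EuclideanSpace ℝ ι} (hv : ∀ i, |v i| ≤ 1) : ‖v‖ ≤ √(Fintype.card ι) := by
  rw [EuclideanSpace.norm_eq]
  gcongr
  calc ∑ i, ‖v i‖ ^ 2 ≤ ∑ _i : ι, (1 : ℝ) := Finset.sum_le_sum fun i _ => by
        rw [sq_le_one_iff_abs_le_one, abs_norm]
        exact hv i
    _ = Fintype.card ι := by simp

lemma ae_norm_le_sqrt_truncGaussMeasure (d : ℕ) : ∀ᵐ v ∂truncGaussMeasure d, ‖v‖ ≤ √d := by
  filter_upwards [ae_abs_le_one_truncGaussMeasure d] with v hv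
  simpa using EuclideanSpace.norm_le_sqrt_card_of_forall_abs_le_one hv

lemma integrable_id_truncGaussMeasure (d : ℕ) : Integrable (fun v => v) (truncGaussMeasure d) :=
  (integrable_const √d).mono' aestronglyMeasurable_id (ae_norm_le_sqrt_truncGaussMeasure d)

lemma integral_norm_truncGaussMeasure_le (d : ℕ) : ∫ v, ‖v‖ ∂truncGaussMeasure d ≤ √d := by
  calc ∫ v, ‖v‖ ∂truncGaussMeasure d ≤ ∫ _, √d ∂truncGaussMeasure d :=
        integral_mono_of_nonneg (Filter.Eventually.of_forall fun v => norm_nonneg v)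
          (integrable_const _) (ae_norm_le_sqrt_truncGaussMeasure d)
    _ = √d := by simp

/-- for convex `L`-Lipschitz `f`, smoothing with the ℓ∞-ball-truncated
Gaussian satisfies `f(x) ≤ f_ρ(x) ≤ f(x) + (5/4) L ρ √d`. -/
theorem truncated_gaussian_smoothing_bounds (d : ℕ) (L ρ : ℝ) (hL : 0 ≤ L) (hρ : 0 < ρ)
    (f : EuclideanSpace ℝ (Fin d) → ℝ)
    (hconv : ConvexOn ℝ Set.univ f) (hlip : LipschitzWith (Real.toNNReal L) f) :
    ∀ x, f x ≤ (∫ v, f (x + ρ • v) ∂(truncGaussMeasure d)) ∧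
      (∫ v, f (x + ρ • v) ∂(truncGaussMeasure d)) ≤ f x + 5/4 * L * ρ * Real.sqrt d := by
  intro x
  have hμ := integrable_id_truncGaussMeasure d
  refine ⟨hconv.le_integral_comp_add_smul hlip.continuous hμ (integral_id_truncGaussMeasure d) x ρ
    (hlip.integrable_comp_add_smul hμ x ρ), ?_⟩
  calc ∫ v, f (x + ρ • v) ∂truncGaussMeasure d
      ≤ f x + L * ρ * ∫ v, ‖v‖ ∂truncGaussMeasure d := by
        simpa only [Real.coe_toNNReal L hL] using hlip.integral_comp_add_smul_le hμ x hρ.le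
    _ ≤ f x + L * ρ * √d := by gcongr; exact integral_norm_truncGaussMeasure_le d
    _ ≤ f x + 5/4 * L * ρ * √d := by
        linarith [mul_nonneg (mul_nonneg hL hρ.le) (sqrt_nonneg (d : ℝ))]
end

section
/- Let q ≥ 2, σ > 0, β > 0, T ∈ ℕ with T ≥ 1, and consider R(x) = β · max_{k ∈ [T]} ξ_k ⟨e_{α(k)}, x⟩ + (σ/q)‖x‖^q on ℝ^d with d ≥ T, where α is injective on [T] and ξ_k ∈ {−1,1}. Then min_x R(x) = −((q−1)/q) (β^q / (σ T^{q/2}))^{1/(q−1)}. -/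
/-!
Let `v = ∑ ξ_k e_k`, a vector of norm `√T`. Since the maximum of the `T` numbers
`ξ_k ⟪e_k, x⟫` dominates their mean `⟪v, x⟫ / T`, Cauchy–Schwarz gives
`R x ≥ -(β/√T) ‖x‖ + (σ/q) ‖x‖^q`, with equality on the ray `x = -t v`, where all the
`ξ_k ⟪e_k, x⟫` coincide. The minimum of `R` is therefore the minimum over `r ≥ 0` of
`-b r + (σ/q) r^q` with `b = β/√T`, which Young's inequality identifies as
`-((q-1)/q) (b^q/σ)^{1/(q-1)}`, attained at `r = (b/σ)^{1/(q-1)}`.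
-/

open Real Set Finset

open scoped RealInnerProductSpace

section OneDimensional

variable {q σ b : ℝ}

theorem neg_mul_add_div_mul_rpow_ge (hq : 1 < q) (hσ : 0 < σ) (hb : 0 ≤ b) {r : ℝ} (hr : 0 ≤ r) :
    -((q - 1) / q * (b ^ q / σ) ^ (1 / (q - 1))) ≤ -(b * r) + σ / q * r ^ q := by
  have hq0 : 0 < q := by linarith
  have hσq : 0 < σ ^ q⁻¹ := rpow_pos_of_pos hσ _
  -- Young's inequality for `(σ^{1/q} r) (b σ^{-1/q})` with exponents `q` and `q/(q-1)`
  have hconj : q.HolderConjugate (q / (q - 1)) := HolderConjugate.conjExponent hq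
  have young := young_inequality_of_nonneg (a := σ ^ q⁻¹ * r) (b := b * (σ ^ q⁻¹)⁻¹)
    (by positivity) (by positivity) hconj
  have hprod : σ ^ q⁻¹ * r * (b * (σ ^ q⁻¹)⁻¹) = b * r := by field_simp
  have hfirst : (σ ^ q⁻¹ * r) ^ q = σ * r ^ q := by
    rw [mul_rpow hσq.le hr, ← rpow_mul hσ.le, inv_mul_cancel₀ hq0.ne', rpow_one]
  have hsecond : (b * (σ ^ q⁻¹)⁻¹) ^ (q / (q - 1)) = (b ^ q / σ) ^ (1 / (q - 1)) := by
    rw [← rpow_neg_one (σ ^ q⁻¹), ← rpow_mul hσ.le, mul_rpow hb (rpow_nonneg hσ.le _),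
      ← rpow_mul hσ.le, div_rpow (rpow_nonneg hb _) hσ.le, ← rpow_mul hb,
      eq_div_iff (rpow_pos_of_pos hσ (1 / (q - 1))).ne', mul_assoc, ← rpow_add hσ,
      show q⁻¹ * -1 * (q / (q - 1)) + 1 / (q - 1) = 0 by field_simp; ring, rpow_zero, mul_one,
      mul_one_div]
  rw [hprod, hfirst, hsecond] at young
  have hdiv : (b ^ q / σ) ^ (1 / (q - 1)) / (q / (q - 1))
      = (q - 1) / q * (b ^ q / σ) ^ (1 / (q - 1)) := by
    field_simp
  have hreg : σ / q * r ^ q = σ * r ^ q / q := by ring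
  linarith

theorem neg_mul_add_div_mul_rpow_at_minimizer (hq : 1 < q) (hσ : 0 < σ) (hb : 0 ≤ b) :
    -(b * (b / σ) ^ (1 / (q - 1))) + σ / q * ((b / σ) ^ (1 / (q - 1))) ^ q
      = -((q - 1) / q * (b ^ q / σ) ^ (1 / (q - 1))) := by
  have hq1 : q - 1 ≠ 0 := by linarith
  have hbσ : 0 ≤ b / σ := div_nonneg hb hσ.le
  set r := (b / σ) ^ (1 / (q - 1))
  have hr : 0 ≤ r := rpow_nonneg hbσ _
  have hrq1 : r ^ (q - 1) = b / σ := by rw [← rpow_mul hbσ, one_div_mul_cancel hq1, rpow_one]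
  have hrq : r ^ q = b / σ * r := by
    rw [← hrq1, ← rpow_add_one' hr (by linarith), sub_add_cancel]
  have hbr : b * r = (b ^ q / σ) ^ (1 / (q - 1)) :=
    calc b * r = (b ^ (q - 1)) ^ (1 / (q - 1)) * r := by
          rw [← rpow_mul hb, mul_one_div_cancel hq1, rpow_one]
      _ = (b ^ (q - 1) * (b / σ)) ^ (1 / (q - 1)) := (mul_rpow (rpow_nonneg hb _) hbσ).symm
      _ = (b ^ q / σ) ^ (1 / (q - 1)) := by
          rw [mul_div_assoc', ← rpow_add_one' hb (by linarith), sub_add_cancel]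
  rw [hrq, ← hbr]
  field_simp
  ring

theorem isLeast_image_neg_mul_add_div_mul_rpow (hq : 1 < q) (hσ : 0 < σ) (hb : 0 ≤ b) :
    IsLeast ((fun r => -(b * r) + σ / q * r ^ q) '' Ici 0)
      (-((q - 1) / q * (b ^ q / σ) ^ (1 / (q - 1)))) :=
  ⟨⟨(b / σ) ^ (1 / (q - 1)), rpow_nonneg (div_nonneg hb hσ.le) _,
      neg_mul_add_div_mul_rpow_at_minimizer hq hσ hb⟩,
    by rintro _ ⟨r, hr, rfl⟩; exact neg_mul_add_div_mul_rpow_ge hq hσ hb hr⟩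

end OneDimensional

namespace Orthonormal

variable {E ι : Type*} [NormedAddCommGroup E] [InnerProductSpace ℝ E] [Fintype ι]
  {e : ι → E} {ξ : ι → ℝ}

theorem norm_sum_smul (he : Orthonormal ℝ e) :
    ‖∑ k, ξ k • e k‖ = √(∑ k, ξ k ^ 2) := by
  rw [norm_eq_sqrt_real_inner, he.inner_sum]
  simp [sq]

theorem norm_sum_smul_of_abs_eq_one (he : Orthonormal ℝ e) (hξ : ∀ k, |ξ k| = 1) :
    ‖∑ k, ξ k • e k‖ = √(Fintype.card ι) := by
  simp [he.norm_sum_smul, ← sq_abs, hξ]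

theorem neg_norm_div_sqrt_card_le_sup' (he : Orthonormal ℝ e) (hι : (univ : Finset ι).Nonempty)
    (hξ : ∀ k, |ξ k| ≤ 1) (x : E) :
    -(‖x‖ / √(Fintype.card ι)) ≤ univ.sup' hι (fun k => ξ k * ⟪e k, x⟫) := by
  set S := univ.sup' hι (fun k => ξ k * ⟪e k, x⟫)
  have hn : (0 : ℝ) < Fintype.card ι := by simpa using hι.card_pos
  have hs : 0 < √(Fintype.card ι : ℝ) := sqrt_pos.mpr hn
  have hv : ‖∑ k, ξ k • e k‖ ≤ √(Fintype.card ι) := by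
    rw [he.norm_sum_smul]
    gcongr
    calc ∑ k, ξ k ^ 2 ≤ ∑ _k : ι, (1 : ℝ) := by
          gcongr with k; rw [← sq_abs]; exact pow_le_one₀ (abs_nonneg _) (hξ k)
      _ = Fintype.card ι := by simp
  have hsum : ∑ k, ξ k * ⟪e k, x⟫ = ⟪∑ k, ξ k • e k, x⟫ := by
    simp [sum_inner, real_inner_smul_left]
  have hCS : -(√(Fintype.card ι) * ‖x‖) ≤ ∑ k, ξ k * ⟪e k, x⟫ := by
    calc -(√(Fintype.card ι) * ‖x‖) ≤ -(‖∑ k, ξ k • e k‖ * ‖x‖) := by gcongr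
      _ ≤ ⟪∑ k, ξ k • e k, x⟫ := neg_le_of_abs_le (abs_real_inner_le_norm _ _)
      _ = ∑ k, ξ k * ⟪e k, x⟫ := hsum.symm
  have hmax : ∑ k, ξ k * ⟪e k, x⟫ ≤ Fintype.card ι * S :=
    calc ∑ k, ξ k * ⟪e k, x⟫ ≤ ∑ _k : ι, S :=
          sum_le_sum fun k _ => le_sup' (fun k => ξ k * ⟪e k, x⟫) (mem_univ k)
      _ = Fintype.card ι * S := by simp
  have hscaled : √(Fintype.card ι) * -‖x‖ ≤ √(Fintype.card ι) * (√(Fintype.card ι) * S) := by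
    rw [← mul_assoc, mul_self_sqrt hn.le]
    linarith
  rw [neg_le, le_div_iff₀ hs]
  linarith [le_of_mul_le_mul_left hscaled hs]

theorem isLeast_range_mul_sup'_add_div_mul_norm_rpow (he : Orthonormal ℝ e)
    (hι : (univ : Finset ι).Nonempty) (hξ : ∀ k, |ξ k| = 1) {q σ β : ℝ} (hq : 1 < q)
    (hσ : 0 < σ) (hβ : 0 ≤ β) :
    IsLeast (range fun x : E => β * univ.sup' hι (fun k => ξ k * ⟪e k, x⟫) + σ / q * ‖x‖ ^ q)
      (-((q - 1) / q * (β ^ q / (σ * (Fintype.card ι : ℝ) ^ (q / 2))) ^ (1 / (q - 1)))) := by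
  set s := √(Fintype.card ι : ℝ) with hs_def
  have hn : (0 : ℝ) < Fintype.card ι := by simpa using hι.card_pos
  have hs : 0 < s := sqrt_pos.mpr hn
  have hsq : s ^ q = (Fintype.card ι : ℝ) ^ (q / 2) := by
    rw [hs_def, sqrt_eq_rpow, ← rpow_mul hn.le, one_div_mul_eq_div]
  have hconst : β ^ q / (σ * (Fintype.card ι : ℝ) ^ (q / 2)) = (β / s) ^ q / σ := by
    rw [div_rpow hβ hs.le, hsq, div_div, mul_comm σ]
  rw [hconst]
  obtain ⟨⟨r, hr, hmin⟩, hlower⟩ :=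
    isLeast_image_neg_mul_add_div_mul_rpow hq hσ (div_nonneg hβ hs.le)
  constructor
  · -- at `x = -(r / s) ∑ ξ_k e_k` every `ξ_k ⟪e_k, x⟫` equals `-r / s`, and `‖x‖ = r`
    refine ⟨-(r / s) • ∑ k, ξ k • e k, ?_⟩
    have hcoord : ∀ k, ξ k * ⟪e k, -(r / s) • ∑ k, ξ k • e k⟫ = -(r / s) := fun k => by
      rw [real_inner_smul_right, he.inner_right_fintype, mul_left_comm, ← sq, ← sq_abs, hξ k,
        one_pow, mul_one]
    have hnorm : ‖-(r / s) • ∑ k, ξ k • e k‖ = r := by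
      rw [norm_smul, he.norm_sum_smul_of_abs_eq_one hξ, norm_neg, norm_div, norm_of_nonneg hr,
        norm_of_nonneg hs.le, div_mul_cancel₀ _ hs.ne']
    simp only [hcoord, sup'_const, hnorm, ← hmin]
    ring
  · rintro _ ⟨x, rfl⟩
    calc _ ≤ -(β / s * ‖x‖) + σ / q * ‖x‖ ^ q := hlower ⟨‖x‖, norm_nonneg x, rfl⟩
      _ = β * -(‖x‖ / s) + σ / q * ‖x‖ ^ q := by ring
      _ ≤ β * univ.sup' hι (fun k => ξ k * ⟪e k, x⟫) + σ / q * ‖x‖ ^ q := by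
        gcongr
        exact he.neg_norm_div_sqrt_card_le_sup' hι (fun k => (hξ k).le) x

end Orthonormal

theorem min_of_regularized_max_general (d T : ℕ) (hT : 0 < T)
    (q σ β : ℝ) (hq : 2 ≤ q) (hσ : 0 < σ) (hβ : 0 < β)
    (α : Fin T → Fin d) (hα : Function.Injective α)
    (ξ : Fin T → ℝ) (hξ : ∀ k, ξ k = 1 ∨ ξ k = -1)
    (R : EuclideanSpace ℝ (Fin d) → ℝ)
    (hR : ∀ x, R x = β * Finset.univ.sup'
        (Finset.univ_nonempty_iff.mpr (Fin.pos_iff_nonempty.mp hT))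
        (fun k : Fin T => ξ k * x (α k)) + σ / q * ‖x‖ ^ q) :
    IsLeast (Set.range R) (-((q - 1) / q * (β ^ q / (σ * (T : ℝ) ^ (q / 2))) ^ (1 / (q - 1)))) := by
  have he : Orthonormal ℝ fun k => EuclideanSpace.single (α k) (1 : ℝ) :=
    EuclideanSpace.orthonormal_single.comp α hα
  have hξ_abs : ∀ k, |ξ k| = 1 := fun k => by rcases hξ k with h | h <;> simp [h]
  have h := he.isLeast_range_mul_sup'_add_div_mul_norm_rpow
    (univ_nonempty_iff.mpr (Fin.pos_iff_nonempty.mp hT)) hξ_abs (q := q) (by linarith) hσ hβ.le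
  simp only [EuclideanSpace.inner_single_left, map_one, one_mul, Fintype.card_fin] at h
  rwa [show R = _ from funext hR]

/-- the minimum of `R(x) = β max_k ξ_k x_{α(k)} + (σ/q)‖x‖^q` equals
`-((q-1)/q) (β^q / (σ T^{q/2}))^{1/(q-1)}`. -/
theorem min_of_regularized_max (d T : ℕ) (hT : 0 < T) (hTd : T ≤ d)
    (q σ β : ℝ) (hq : 2 ≤ q) (hσ : 0 < σ) (hβ : 0 < β)
    (α : Fin T → Fin d) (hα : Function.Injective α)
    (ξ : Fin T → ℝ) (hξ : ∀ k, ξ k = 1 ∨ ξ k = -1)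
    (R : EuclideanSpace ℝ (Fin d) → ℝ)
    (hR : ∀ x, R x = β * Finset.univ.sup'
        (Finset.univ_nonempty_iff.mpr (Fin.pos_iff_nonempty.mp hT))
        (fun k : Fin T => ξ k * x (α k)) + σ / q * ‖x‖ ^ q) :
    IsLeast (Set.range R) (-((q - 1) / q * (β ^ q / (σ * (T : ℝ) ^ (q / 2))) ^ (1 / (q - 1)))) :=
  min_of_regularized_max_general d T hT q σ β hq hσ hβ α hα ξ hξ R hR
end

section
/- Let y ∈ ℝ^{T̃} with y_1 ≥ ⋯ ≥ y_{T̃} ≥ 0, let r > 1, γ > 0, c > 0, and suppose y_t ≥ y_1 − (t−1)γ^{1/r} for all t, Σ_{i=1}^{T̃} y_i = γ/c, and T̃ = ⌊ y_1/γ^{1/r} + 1 ⌋. Then y_1 ≤ γ^{1/r} + √(2 γ^{(r+1)/r} / c). -/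
/-!
If `T = ⌊y₁/d + 1⌋₊` with `d = γ^{1/r}`, then `d (T - 1) ≤ y₁ ≤ d T`, and summing the
arithmetic-progression lower bound `y_t ≥ y₁ - (t - 1) d` gives
`γ / c = Σ y_t ≥ T y₁ - d T (T - 1) / 2 ≥ y₁² / (2 d)`.
Hence `y₁ ≤ √(2 d γ / c) = √(2 γ^{(r+1)/r} / c)`, which is even sharper than the claim.
-/

open Real Set Finset

lemma sum_Icc_natCast_sub_one (T : ℕ) :
    ∑ t ∈ Icc 1 T, ((t : ℝ) - 1) = T * (T - 1) / 2 := by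
  induction T with
  | zero => simp
  | succ n ih =>
    rw [sum_Icc_succ_top (by omega), ih]
    push_cast
    ring

lemma sum_Icc_ge_of_arith_lb {a d : ℝ} {T : ℕ} {y : ℕ → ℝ}
    (hlb : ∀ t, 1 ≤ t → t ≤ T → y t ≥ a - ((t : ℝ) - 1) * d) :
    T * a - d * (T * (T - 1) / 2) ≤ ∑ t ∈ Icc 1 T, y t := by
  calc T * a - d * (T * (T - 1) / 2) = ∑ t ∈ Icc 1 T, (a - ((t : ℝ) - 1) * d) := by
        rw [sum_sub_distrib, ← sum_mul, sum_Icc_natCast_sub_one, sum_const, Nat.card_Icc,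
          nsmul_eq_mul, Nat.add_sub_cancel]
        ring
    _ ≤ ∑ t ∈ Icc 1 T, y t :=
        sum_le_sum fun t ht => hlb t (mem_Icc.mp ht).1 (mem_Icc.mp ht).2

lemma floor_div_add_one_bounds {a d : ℝ} (hd : 0 < d) (ha : 0 ≤ a) :
    d * ((⌊a / d + 1⌋₊ : ℝ) - 1) ≤ a ∧ a < d * ⌊a / d + 1⌋₊ := by
  have hx : 0 ≤ a / d := by positivity
  rw [Nat.floor_add_one hx, Nat.cast_add_one, add_sub_cancel_right]
  constructor
  · rw [mul_comm, ← le_div_iff₀ hd]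
    exact Nat.floor_le hx
  · rw [mul_comm, ← div_lt_iff₀ hd]
    exact Nat.lt_floor_add_one _

/-- `⌊a/d + 1⌋₊` counts the nonnegative terms of the progression `a - (t - 1) d`. -/
lemma sq_le_two_mul_sum_of_arith_lb {a d : ℝ} (hd : 0 < d) (ha : 0 ≤ a) {y : ℕ → ℝ}
    (hlb : ∀ t, 1 ≤ t → t ≤ ⌊a / d + 1⌋₊ → y t ≥ a - ((t : ℝ) - 1) * d) :
    a ^ 2 ≤ 2 * d * ∑ t ∈ Icc 1 ⌊a / d + 1⌋₊, y t := by
  set T := ⌊a / d + 1⌋₊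
  obtain ⟨hTa, haT⟩ := floor_div_add_one_bounds hd ha
  have hsum := sum_Icc_ge_of_arith_lb hlb
  -- `d T (a - d (T - 1)) + (d T - a) a = 2 d (T a - d T (T - 1) / 2) - a²`
  nlinarith [mul_nonneg (by linarith : (0 : ℝ) ≤ d * T) (by linarith : 0 ≤ a - d * (T - 1)),
    mul_nonneg (by linarith : (0 : ℝ) ≤ d * T - a) ha]

lemma rpow_add_one_div_self {γ r : ℝ} (hγ : 0 < γ) (hr : r ≠ 0) :
    γ ^ ((r + 1) / r) = γ * γ ^ (1 / r) := by
  rw [add_div, div_self hr, rpow_add hγ, rpow_one]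

theorem first_coordinate_upper_bound_general (r γ c : ℝ) (hr : 1 < r) (hγ : 0 < γ)
    (T : ℕ) (y : ℕ → ℝ)
    (hlb : ∀ t, 1 ≤ t → t ≤ T → y t ≥ y 1 - ((t : ℝ) - 1) * γ ^ (1 / r))
    (hsum : ∑ i ∈ Finset.Icc 1 T, y i = γ / c)
    (hTdef : T = ⌊y 1 / γ ^ (1 / r) + 1⌋₊) :
    y 1 ≤ γ ^ (1 / r) + Real.sqrt (2 * γ ^ ((r + 1) / r) / c) := by
  have hd : 0 < γ ^ (1 / r) := rpow_pos_of_pos hγ _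
  rcases lt_or_ge (y 1) 0 with hneg | hy1
  · linarith [sqrt_nonneg (2 * γ ^ ((r + 1) / r) / c)]
  subst hTdef
  have hsq := sq_le_two_mul_sum_of_arith_lb hd hy1 hlb
  rw [hsum] at hsq
  have hrad : 2 * γ ^ (1 / r) * (γ / c) = 2 * γ ^ ((r + 1) / r) / c := by
    rw [rpow_add_one_div_self hγ (by linarith)]
    ring
  calc y 1 = √(y 1 ^ 2) := (sqrt_sq hy1).symm
    _ ≤ √(2 * γ ^ ((r + 1) / r) / c) := sqrt_le_sqrt (hrad ▸ hsq)
    _ ≤ γ ^ (1 / r) + √(2 * γ ^ ((r + 1) / r) / c) := le_add_of_nonneg_left hd.le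

/-- with `Σ y_i = γ/c`, `y_t ≥ y_1 − (t−1)γ^{1/r}` and
`T̃ = ⌊y_1/γ^{1/r} + 1⌋`, one gets `y_1 ≤ γ^{1/r} + √(2 γ^{(r+1)/r} / c)`. -/
theorem first_coordinate_upper_bound (r γ c : ℝ) (hr : 1 < r) (hγ : 0 < γ) (hc : 0 < c)
    (T : ℕ) (hT : 1 ≤ T) (y : ℕ → ℝ)
    (hsorted : ∀ i j, 1 ≤ i → i ≤ j → j ≤ T → y j ≤ y i)
    (hnonneg : 0 ≤ y T)
    (hlb : ∀ t, 1 ≤ t → t ≤ T → y t ≥ y 1 - ((t : ℝ) - 1) * γ ^ (1 / r))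
    (hsum : ∑ i ∈ Finset.Icc 1 T, y i = γ / c)
    (hTdef : T = ⌊y 1 / γ ^ (1 / r) + 1⌋₊) :
    y 1 ≤ γ ^ (1 / r) + Real.sqrt (2 * γ ^ ((r + 1) / r) / c) :=
  first_coordinate_upper_bound_general r γ c hr hγ T y hlb hsum hTdef
end
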